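/- Suppose ℓ : [0,T] × ℝ → ℝ (possibly random) is bi-Lipschitz in x: there exist constants 0 < c ≤ C such that almost surely, for all t ∈ [0,T] and x,y ∈ ℝ, c|x-y| ≤ |ℓ(t,x) - ℓ(t,y)| ≤ C|x-y|, and ℓ(t,·) is strictly increasing with E[ℓ(t,∞)] > 0. Define L_t(X) = inf{x ≥ 0 : E[ℓ(t, x+X)] ≥ 0} for square-integrable X. Then for all square-integrable X, Y and all t, |L_t(X) - L_t(Y)| ≤ (C/c) · E[|X - Y|]. -/

import Mathlib

/-!
If `y` is admissible for `Y`, then `y + d` with `d = (C/c) E|X - Y|` is admissible for `X`: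
moving the argument of `ℓ` from `y + Y` to `y + d + X` costs at most `C |X - Y|` through the
Lipschitz bound, while the shift by `d` gains at least `c d = C E|X - Y|` by monotonicity and the
lower Lipschitz bound. Hence `L(X) ≤ L(Y) + d`, and symmetrically.
-/

open MeasureTheory Set

/-- `L_t(X)` is `sInf (acceptanceSet μ (ℓ t) X)`. -/
def acceptanceSet {Ω : Type*} [MeasurableSpace Ω] (μ : Measure Ω) (f : ℝ → Ω → ℝ)
    (X : Ω → ℝ) : Set ℝ :=
  {x | 0 ≤ x ∧ 0 ≤ ∫ ω, f (x + X ω) ω ∂μ}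

lemma sInf_le_sInf_add_of_add_mem {S S' : Set ℝ} {d : ℝ} (hS : BddBelow S)
    (hS' : S'.Nonempty) (h : ∀ y ∈ S', y + d ∈ S) : sInf S ≤ sInf S' + d := by
  rw [← sub_le_iff_le_add]
  refine le_csInf hS' fun y hy => ?_
  linarith [csInf_le hS (h y hy)]

lemma add_sub_le_apply_add_of_biLipschitz {g : ℝ → ℝ} {c C d : ℝ} (hg : Monotone g)
    (hlow : ∀ x y, c * |x - y| ≤ |g x - g y|) (hup : ∀ x y, |g x - g y| ≤ C * |x - y|)
    (hd : 0 ≤ d) (u v : ℝ) : g u + (c * d - C * |v - u|) ≤ g (v + d) := by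
  have hgain : c * d ≤ g (u + d) - g u := by
    have h := hlow (u + d) u
    rwa [add_sub_cancel_left, abs_of_nonneg hd,
      abs_of_nonneg (sub_nonneg.2 (hg (le_add_of_nonneg_right hd)))] at h
  have hcost : -(C * |v - u|) ≤ g (v + d) - g (u + d) := by
    have h := neg_abs_le (g (v + d) - g (u + d))
    have h' := hup (v + d) (u + d)
    rw [add_sub_add_right_eq_sub] at h'
    linarith
  linarith

section AcceptanceSet

variable {Ω : Type*} [MeasurableSpace Ω] {μ : Measure Ω} [IsProbabilityMeasure μ]
  {f : ℝ → Ω → ℝ} {c C : ℝ} {X Y : Ω → ℝ}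

lemma integral_add_sub_le_integral_add_of_biLipschitz
    (hmono : ∀ᵐ ω ∂μ, Monotone (f · ω))
    (hlow : ∀ᵐ ω ∂μ, ∀ x y, c * |x - y| ≤ |f x ω - f y ω|)
    (hup : ∀ᵐ ω ∂μ, ∀ x y, |f x ω - f y ω| ≤ C * |x - y|)
    (hintX : ∀ x, Integrable (fun ω => f (x + X ω) ω) μ)
    (hintY : ∀ x, Integrable (fun ω => f (x + Y ω) ω) μ)
    (hXY : Integrable (fun ω => |X ω - Y ω|) μ) {d : ℝ} (hd : 0 ≤ d) (y : ℝ) :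
    ∫ ω, f (y + Y ω) ω ∂μ + (c * d - C * ∫ ω, |X ω - Y ω| ∂μ)
      ≤ ∫ ω, f (y + d + X ω) ω ∂μ := by
  have hshift : Integrable (fun ω => c * d - C * |X ω - Y ω|) μ :=
    (integrable_const _).sub (hXY.const_mul C)
  have hpointwise : ∀ᵐ ω ∂μ,
      f (y + Y ω) ω + (c * d - C * |X ω - Y ω|) ≤ f (y + d + X ω) ω := by
    filter_upwards [hmono, hlow, hup] with ω hmono hlow hup
    have h := add_sub_le_apply_add_of_biLipschitz hmono hlow hup hd (y + Y ω) (y + X ω)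
    rwa [add_sub_add_left_eq_sub, add_right_comm] at h
  calc ∫ ω, f (y + Y ω) ω ∂μ + (c * d - C * ∫ ω, |X ω - Y ω| ∂μ)
      = ∫ ω, f (y + Y ω) ω + (c * d - C * |X ω - Y ω|) ∂μ := by
        rw [integral_add (hintY y) hshift, integral_sub (integrable_const _) (hXY.const_mul C),
          integral_const, integral_const_mul, probReal_univ, one_smul]
    _ ≤ ∫ ω, f (y + d + X ω) ω ∂μ :=
        integral_mono_ae ((hintY y).add hshift) (hintX (y + d)) hpointwise

lemma sInf_acceptanceSet_le (hc : 0 < c) (hC : 0 ≤ C)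
    (hmono : ∀ᵐ ω ∂μ, Monotone (f · ω))
    (hlow : ∀ᵐ ω ∂μ, ∀ x y, c * |x - y| ≤ |f x ω - f y ω|)
    (hup : ∀ᵐ ω ∂μ, ∀ x y, |f x ω - f y ω| ≤ C * |x - y|)
    (hintX : ∀ x, Integrable (fun ω => f (x + X ω) ω) μ)
    (hintY : ∀ x, Integrable (fun ω => f (x + Y ω) ω) μ)
    (hXY : Integrable (fun ω => |X ω - Y ω|) μ) (hneY : (acceptanceSet μ f Y).Nonempty) :
    sInf (acceptanceSet μ f X)
      ≤ sInf (acceptanceSet μ f Y) + (C / c) * ∫ ω, |X ω - Y ω| ∂μ := by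
  set d := (C / c) * ∫ ω, |X ω - Y ω| ∂μ
  have hd : 0 ≤ d := mul_nonneg (div_nonneg hC hc.le) (integral_nonneg fun _ => abs_nonneg _)
  have hcd : c * d = C * ∫ ω, |X ω - Y ω| ∂μ := by
    simp only [d]
    field_simp
  refine sInf_le_sInf_add_of_add_mem ⟨0, fun x hx => hx.1⟩ hneY ?_
  rintro y ⟨hy, hyY⟩
  refine ⟨add_nonneg hy hd, ?_⟩
  have h := integral_add_sub_le_integral_add_of_biLipschitz hmono hlow hup hintX hintY hXY hd y
  rw [hcd, sub_self, add_zero] at h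
  exact hyY.trans h

lemma abs_sub_sInf_acceptanceSet_le (hc : 0 < c) (hC : 0 ≤ C)
    (hmono : ∀ᵐ ω ∂μ, Monotone (f · ω))
    (hlow : ∀ᵐ ω ∂μ, ∀ x y, c * |x - y| ≤ |f x ω - f y ω|)
    (hup : ∀ᵐ ω ∂μ, ∀ x y, |f x ω - f y ω| ≤ C * |x - y|)
    (hintX : ∀ x, Integrable (fun ω => f (x + X ω) ω) μ)
    (hintY : ∀ x, Integrable (fun ω => f (x + Y ω) ω) μ)
    (hXY : Integrable (fun ω => |X ω - Y ω|) μ)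
    (hneX : (acceptanceSet μ f X).Nonempty) (hneY : (acceptanceSet μ f Y).Nonempty) :
    |sInf (acceptanceSet μ f X) - sInf (acceptanceSet μ f Y)|
      ≤ (C / c) * ∫ ω, |X ω - Y ω| ∂μ := by
  have hYX : Integrable (fun ω => |Y ω - X ω|) μ := by simpa only [abs_sub_comm] using hXY
  have hXY_le := sInf_acceptanceSet_le hc hC hmono hlow hup hintX hintY hXY hneY
  have hYX_le := sInf_acceptanceSet_le hc hC hmono hlow hup hintY hintX hYX hneX
  simp only [abs_sub_comm (Y _)] at hYX_le
  rw [abs_sub_le_iff]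
  constructor <;> linarith

end AcceptanceSet

theorem stmt1_general {Ω : Type*} [MeasurableSpace Ω] (μ : Measure Ω) [IsProbabilityMeasure μ]
    (T : ℝ) (c C : ℝ) (hc : 0 < c) (hcC : c ≤ C)
    (ℓ : ℝ → ℝ → Ω → ℝ)
    (hbiLip : ∀ᵐ ω ∂μ, ∀ t ∈ Icc 0 T, ∀ x y : ℝ,
      c * |x - y| ≤ |ℓ t x ω - ℓ t y ω| ∧ |ℓ t x ω - ℓ t y ω| ≤ C * |x - y|)
    (hmono : ∀ᵐ ω ∂μ, ∀ t ∈ Icc 0 T, StrictMono (fun x => ℓ t x ω))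
    (X Y : Ω → ℝ)
    (hintX : ∀ t ∈ Icc 0 T, ∀ x : ℝ, Integrable (fun ω => ℓ t (x + X ω) ω) μ)
    (hintY : ∀ t ∈ Icc 0 T, ∀ x : ℝ, Integrable (fun ω => ℓ t (x + Y ω) ω) μ)
    (hXY : Integrable (fun ω => |X ω - Y ω|) μ)
    (hneX : ∀ t ∈ Icc 0 T,
      {x : ℝ | 0 ≤ x ∧ 0 ≤ ∫ ω, ℓ t (x + X ω) ω ∂μ}.Nonempty)
    (hneY : ∀ t ∈ Icc 0 T,
      {x : ℝ | 0 ≤ x ∧ 0 ≤ ∫ ω, ℓ t (x + Y ω) ω ∂μ}.Nonempty) :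
    ∀ t ∈ Icc 0 T,
      |sInf {x : ℝ | 0 ≤ x ∧ 0 ≤ ∫ ω, ℓ t (x + X ω) ω ∂μ}
        - sInf {x : ℝ | 0 ≤ x ∧ 0 ≤ ∫ ω, ℓ t (x + Y ω) ω ∂μ}|
        ≤ (C / c) * ∫ ω, |X ω - Y ω| ∂μ := by
  intro t ht
  have hmono_t : ∀ᵐ ω ∂μ, Monotone (ℓ t · ω) := by
    filter_upwards [hmono] with ω h using (h t ht).monotone
  have hlow_t : ∀ᵐ ω ∂μ, ∀ x y, c * |x - y| ≤ |ℓ t x ω - ℓ t y ω| := by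
    filter_upwards [hbiLip] with ω h x y using (h t ht x y).1
  have hup_t : ∀ᵐ ω ∂μ, ∀ x y, |ℓ t x ω - ℓ t y ω| ≤ C * |x - y| := by
    filter_upwards [hbiLip] with ω h x y using (h t ht x y).2
  exact abs_sub_sInf_acceptanceSet_le hc (hc.le.trans hcC) hmono_t hlow_t hup_t
    (hintX t ht) (hintY t ht) hXY (hneX t ht) (hneY t ht)

/-- If the (random) running loss function `ℓ` is bi-Lipschitz in `x`
with constants `0 < c ≤ C`, strictly increasing in `x`, and such that the sets
defining the operator `L_t` are nonempty (well-posedness, coming from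
`E[ℓ(t,∞)] > 0`), then `L_t` is Lipschitz with constant `C/c` with respect to
the `L¹`-distance: `|L_t(X) - L_t(Y)| ≤ (C/c) E[|X - Y|]`. -/
theorem stmt1 {Ω : Type*} [MeasurableSpace Ω] (μ : Measure Ω) [IsProbabilityMeasure μ]
    (T : ℝ) (hT : 0 < T) (c C : ℝ) (hc : 0 < c) (hcC : c ≤ C)
    (ℓ : ℝ → ℝ → Ω → ℝ)
    (hbiLip : ∀ᵐ ω ∂μ, ∀ t ∈ Icc 0 T, ∀ x y : ℝ,
      c * |x - y| ≤ |ℓ t x ω - ℓ t y ω| ∧ |ℓ t x ω - ℓ t y ω| ≤ C * |x - y|)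
    (hmono : ∀ᵐ ω ∂μ, ∀ t ∈ Icc 0 T, StrictMono (fun x => ℓ t x ω))
    (X Y : Ω → ℝ) (hX : MemLp X 2 μ) (hY : MemLp Y 2 μ)
    (hintX : ∀ t ∈ Icc 0 T, ∀ x : ℝ, Integrable (fun ω => ℓ t (x + X ω) ω) μ)
    (hintY : ∀ t ∈ Icc 0 T, ∀ x : ℝ, Integrable (fun ω => ℓ t (x + Y ω) ω) μ)
    (hXY : Integrable (fun ω => |X ω - Y ω|) μ)
    (hneX : ∀ t ∈ Icc 0 T,
      {x : ℝ | 0 ≤ x ∧ 0 ≤ ∫ ω, ℓ t (x + X ω) ω ∂μ}.Nonempty)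
    (hneY : ∀ t ∈ Icc 0 T,
      {x : ℝ | 0 ≤ x ∧ 0 ≤ ∫ ω, ℓ t (x + Y ω) ω ∂μ}.Nonempty) :
    ∀ t ∈ Icc 0 T,
      |sInf {x : ℝ | 0 ≤ x ∧ 0 ≤ ∫ ω, ℓ t (x + X ω) ω ∂μ}
        - sInf {x : ℝ | 0 ≤ x ∧ 0 ≤ ∫ ω, ℓ t (x + Y ω) ω ∂μ}|
        ≤ (C / c) * ∫ ω, |X ω - Y ω| ∂μ :=
  stmt1_general μ T c C hc hcC ℓ hbiLip hmono X Y hintX hintY hXY hneX hneY
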